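/- Energy gap upper bound by the inertial cost: for every t ∈ [0,T], u₁, u₂ ∈ X and every regularized contact potential p, E(t,u₁) − E(t,u₂) ≤ c_t^{M,p}(u₁,u₂). Consequently E(t,u₁) − E(t,u₂) ≤ inf_{p ∈ RCP_V} c_t^{M,p}(u₁,u₂). -/

import Mathlib

/-
Along an admissible curve `v` the chain rule gives
`E(t,u₁) - E(t,u₂) = ∫ ⟨-M v̈ - D_x E(t,v), v̇⟩`, because the inertial term
`∫ ⟨M v̈, v̇⟩ = ½ ‖v̇(N)‖²_M - ½ ‖v̇(-N)‖²_M` vanishes by `M v̇(±N) = 0`; the integrand is then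
bounded by `p(v̇, -M v̈ - D_x E(t,v))` since `p(v,w) ≥ ⟨w,v⟩`. As `v̈` is merely bounded, the
identity for the inertial term is obtained from Fubini: for a symmetric form `B`, the integral of
`B(g r, g s)` over `{s ≤ r}` is half of its integral over the whole square. The bound passes to the
infimum because a cubic interpolation between `u₁` and `u₂` is admissible once `N` is large.
-/

open MeasureTheory

/-- An admissible curve in `V^{M,N}_{u₁,u₂}`: a `W^{2,∞}` curve on `[−N,N]`
(encoded through its derivative `dv` and second derivative `ddv` via integral
representations) joining `u₁` to `u₂`, with `M v̇(±N) = 0` and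
`‖M v̈‖_* ≤ C̄` almost everywhere. -/
structure AdmCurve {X : Type*} [NormedAddCommGroup X] [NormedSpace ℝ X]
    (M : X →L[ℝ] X →L[ℝ] ℝ) (Cbar : ℝ) (N : ℕ) (u₁ u₂ : X) where
  v : ℝ → X
  dv : ℝ → X
  ddv : ℝ → X
  h_start : v (-(N : ℝ)) = u₁
  h_end : v (N : ℝ) = u₂
  h_vel_start : M (dv (-(N : ℝ))) = 0
  h_vel_end : M (dv (N : ℝ)) = 0
  h_meas : AEStronglyMeasurable ddv volume
  h_int1 : ∀ r ∈ Set.Icc (-(N : ℝ)) (N : ℝ), v r = u₁ + ∫ s in (-(N : ℝ))..r, dv s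
  h_int2 : ∀ r ∈ Set.Icc (-(N : ℝ)) (N : ℝ), dv r = dv (-(N : ℝ)) + ∫ s in (-(N : ℝ))..r, ddv s
  h_bound : ∀ᵐ r ∂volume, r ∈ Set.Icc (-(N : ℝ)) (N : ℝ) → ‖M (ddv r)‖ ≤ Cbar

/-- The inertial energy-dissipation cost
`c_t^{M,p}(u₁,u₂) = inf { ∫_{−N}^{N} p(v̇, −M v̈ − D_x E(t,v)) dr }`
over `N ∈ ℕ` and admissible curves. -/
noncomputable def inertialCost {X : Type*} [NormedAddCommGroup X] [NormedSpace ℝ X]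
    (M : X →L[ℝ] X →L[ℝ] ℝ) (Cbar : ℝ) (p : X → (X →L[ℝ] ℝ) → ℝ)
    (DE : ℝ → X → (X →L[ℝ] ℝ)) (t : ℝ) (u₁ u₂ : X) : ℝ :=
  sInf {s : ℝ | ∃ N : ℕ, ∃ A : AdmCurve M Cbar N u₁ u₂,
    s = ∫ r in (-(N : ℝ))..(N : ℝ), p (A.dv r) (-(M (A.ddv r)) - DE t (A.v r))}

open Set

section

variable {E : Type*} [NormedAddCommGroup E] [NormedSpace ℝ E]

theorem continuousOn_of_eq_add_integral {a b : ℝ} {f f' : ℝ → E}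
    (hf' : IntegrableOn f' (Icc a b)) (hf : ∀ r ∈ Icc a b, f r = f a + ∫ s in a..r, f' s) :
    ContinuousOn f (Icc a b) :=
  (continuousOn_const (c := f a)).add (intervalIntegral.continuousOn_primitive hf') |>.congr
    fun r hr => by rw [hf r hr, intervalIntegral.integral_of_le hr.1]; rfl

variable [CompleteSpace E]

theorem hasDerivAt_of_eq_add_integral {a b r : ℝ} {f f' : ℝ → E}
    (hf' : ContinuousOn f' (Icc a b)) (hf : ∀ r ∈ Icc a b, f r = f a + ∫ s in a..r, f' s)
    (hr : r ∈ Ioo a b) :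
    HasDerivAt f (f' r) r := by
  have hnhds : Icc a b ∈ nhds r := Icc_mem_nhds hr.1 hr.2
  have hprim : HasDerivAt (fun x => f a + ∫ s in a..x, f' s) (f' r) r :=
    (intervalIntegral.integral_hasDerivAt_right
      ((hf'.mono (Icc_subset_Icc_right hr.2.le)).intervalIntegrable_of_Icc hr.1.le)
      ((hf'.mono Ioo_subset_Icc_self).stronglyMeasurableAtFilter isOpen_Ioo r hr)
      (hf'.continuousAt hnhds)).const_add (f a)
  exact hprim.congr_of_eventuallyEq (Filter.eventually_of_mem hnhds hf)

theorem integral_fderiv_comp_eq_sub {G : Type*} [NormedAddCommGroup G] [NormedSpace ℝ G]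
    [CompleteSpace G] {F : E → G} {DF : E → E →L[ℝ] G} (hF : ∀ x, HasFDerivAt F (DF x) x)
    (hDF : Continuous DF) {a b : ℝ} (hab : a ≤ b) {f f' : ℝ → E} (hf' : ContinuousOn f' (Icc a b))
    (hf : ∀ r ∈ Icc a b, f r = f a + ∫ s in a..r, f' s) :
    ∫ r in a..b, DF (f r) (f' r) = F (f b) - F (f a) := by
  have hfc := continuousOn_of_eq_add_integral hf'.integrableOn_Icc hf
  refine intervalIntegral.integral_eq_sub_of_hasDerivAt_of_le hab
    ((continuous_iff_continuousAt.2 fun x => (hF x).continuousAt).comp_continuousOn hfc)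
    (fun r hr => (hF (f r)).comp_hasDerivAt r (hasDerivAt_of_eq_add_integral hf' hf hr)) ?_
  exact ((hDF.comp_continuousOn hfc).clm_apply hf').intervalIntegrable_of_Icc hab

theorem MeasureTheory.Measure.prod_diagonal_eq_zero {μ ν : Measure ℝ} [SFinite ν]
    [NullSingletonClass ν] : μ.prod ν (diagonal ℝ) = 0 := by
  rw [Measure.prod_apply measurableSet_diagonal]
  simp [Set.preimage, measure_singleton]

variable {B : E →L[ℝ] E →L[ℝ] ℝ}

theorem two_mul_integral_bilin_integral_Iic (hB : ∀ x y, B x y = B y x) {μ : Measure ℝ}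
    [SFinite μ] [NullSingletonClass μ] {g : ℝ → E} (hg : Integrable g μ) :
    2 * ∫ r, B (g r) (∫ s in Iic r, g s ∂μ) ∂μ = B (∫ r, g r ∂μ) (∫ r, g r ∂μ) := by
  set F : ℝ × ℝ → ℝ := fun q => B (g q.1) (g q.2)
  have hF : Integrable F (μ.prod μ) := hg.op_fst_snd (by fun_prop) ⟨‖B‖, B.le_opNorm₂⟩ hg
  set T : Set (ℝ × ℝ) := {q | q.2 ≤ q.1}
  have hT : MeasurableSet T := measurableSet_le measurable_snd measurable_fst
  have lower : ∫ q in T, F q ∂μ.prod μ = ∫ r, B (g r) (∫ s in Iic r, g s ∂μ) ∂μ := by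
    rw [← integral_indicator hT, integral_prod _ (hF.indicator hT)]
    refine integral_congr_ae (ae_of_all _ fun r => ?_)
    have : (fun s => T.indicator F (r, s)) = (Iic r).indicator fun s => B (g r) (g s) := by
      ext s; simp [T, F, indicator_apply]
    simp only [this, integral_indicator measurableSet_Iic]
    exact (B (g r)).integral_comp_comm hg.integrableOn
  have upper : ∫ q in Prod.swap ⁻¹' T, F q ∂μ.prod μ = ∫ q in T, F q ∂μ.prod μ := by
    have hswap : ∀ q : ℝ × ℝ, F q.swap = F q := fun q => hB _ _
    simpa only [hswap] using Measure.measurePreserving_swap.setIntegral_preimage_emb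
      MeasurableEquiv.prodComm.measurableEmbedding F T
  have cover : ∫ q in T, F q ∂μ.prod μ + ∫ q in Prod.swap ⁻¹' T, F q ∂μ.prod μ
      = ∫ q, F q ∂μ.prod μ := by
    rw [← setIntegral_union₀ _ (hT.preimage measurable_swap).nullMeasurableSet
      hF.integrableOn hF.integrableOn]
    · have : T ∪ Prod.swap ⁻¹' T = univ := by
        ext q; simp [T, le_total]
      rw [this, Measure.restrict_univ]
    · refine measure_mono_null (fun q hq => ?_) Measure.prod_diagonal_eq_zero
      exact le_antisymm hq.2 hq.1
  rw [← integral_prod_bilin B hg hg, ← cover, upper, lower, two_mul]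

theorem two_mul_intervalIntegral_bilin_eq_sub (hB : ∀ x y, B x y = B y x) {a b : ℝ}
    (hab : a ≤ b) {f f' : ℝ → E} (hf' : IntegrableOn f' (Icc a b))
    (hf : ∀ r ∈ Icc a b, f r = f a + ∫ s in a..r, f' s) :
    2 * ∫ r in a..b, B (f' r) (f r) = B (f b) (f b) - B (f a) (f a) := by
  set μ := volume.restrict (Ioc a b)
  have hg : Integrable f' μ := hf'.mono_set Ioc_subset_Icc_self
  have hfc := continuousOn_of_eq_add_integral hf' hf
  obtain ⟨C, hC⟩ := isCompact_Icc.exists_bound_of_continuousOn hfc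
  have hint : Integrable (fun r => B (f' r) (f r)) μ :=
    B.integrable_of_bilin_of_bdd_right C hg
      ((hfc.mono Ioc_subset_Icc_self).aestronglyMeasurable measurableSet_Ioc)
      (ae_restrict_of_forall_mem measurableSet_Ioc fun r hr => hC r (Ioc_subset_Icc_self hr))
  have htot : ∫ r, f' r ∂μ = f b - f a := by
    rw [← intervalIntegral.integral_of_le hab, hf b (right_mem_Icc.2 hab), add_sub_cancel_left]
  have hprim : ∀ r ∈ Ioc a b, ∫ s in Iic r, f' s ∂μ = f r - f a := by
    intro r hr
    rw [Measure.restrict_restrict measurableSet_Iic, Iic_inter_Ioc_of_le hr.2,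
      ← intervalIntegral.integral_of_le hr.1.le, hf r (Ioc_subset_Icc_self hr),
      add_sub_cancel_left]
  have hsplit : ∫ r, B (f' r) (∫ s in Iic r, f' s ∂μ) ∂μ
      = ∫ r, B (f' r) (f r) ∂μ - B (f b - f a) (f a) := by
    calc _ = ∫ r, (B (f' r) (f r) - B.flip (f a) (f' r)) ∂μ :=
          integral_congr_ae (ae_restrict_of_forall_mem measurableSet_Ioc fun r hr => by
            simp [hprim r hr])
      _ = _ := by
        rw [integral_sub hint ((B.flip (f a)).integrable_comp hg),
          (B.flip (f a)).integral_comp_comm hg, htot]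
        rfl
  have key := two_mul_integral_bilin_integral_Iic hB hg
  rw [hsplit, htot] at key
  simp only [map_sub, sub_apply, hB (f a) (f b)] at key
  rw [intervalIntegral.integral_of_le hab]
  linarith

end

theorem integrable_comp_of_ae_mem_isCompact {α Y Z : Type*} [MeasurableSpace α] {μ : Measure α}
    [IsFiniteMeasure μ] [TopologicalSpace Y] [NormedAddCommGroup Z] {φ : Y → Z}
    (hφ : Continuous φ) {h : α → Y} (hh : AEStronglyMeasurable h μ) {K : Set Y}
    (hK : IsCompact K) (hhK : ∀ᵐ x ∂μ, h x ∈ K) : Integrable (fun x => φ (h x)) μ := by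
  obtain ⟨C, hC⟩ := hK.exists_bound_of_continuousOn hφ.continuousOn
  exact .of_bound (hφ.comp_aestronglyMeasurable hh) C (hhK.mono fun x hx => hC _ hx)

theorem ContinuousLinearMap.injective_of_forall_apply_self_pos {X : Type*}
    [NormedAddCommGroup X] [NormedSpace ℝ X] {M : X →L[ℝ] X →L[ℝ] ℝ}
    (hM : ∀ x, x ≠ 0 → 0 < M x x) : Function.Injective M := by
  refine (injective_iff_map_eq_zero M).2 fun x hx => ?_
  by_contra hx0
  simpa [hx] using hM x hx0

namespace AdmCurve

variable {X : Type*} [NormedAddCommGroup X] [NormedSpace ℝ X]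
  {M : X →L[ℝ] X →L[ℝ] ℝ} {Cbar : ℝ} {N : ℕ} {u₁ u₂ : X} (A : AdmCurve M Cbar N u₁ u₂)

theorem v_eq_add_integral :
    ∀ r ∈ Icc (-(N : ℝ)) N, A.v r = A.v (-(N : ℝ)) + ∫ s in (-(N : ℝ))..r, A.dv s :=
  A.h_start.symm ▸ A.h_int1

variable [FiniteDimensional ℝ X]

theorem integrableOn_ddv (hM : Function.Injective M) : IntegrableOn A.ddv (Icc (-(N : ℝ)) N) := by
  obtain ⟨K, -, hK⟩ :=
    (M : X →ₗ[ℝ] X →L[ℝ] ℝ).exists_antilipschitzWith (LinearMap.ker_eq_bot.2 hM)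
  refine Integrable.of_bound A.h_meas.restrict ((K : ℝ) * Cbar) ?_
  filter_upwards [(ae_restrict_iff' measurableSet_Icc).2 A.h_bound] with r hr
  exact (hK.le_mul_norm (map_zero M) _).trans (by gcongr; exact hr)

theorem continuousOn_dv (hM : Function.Injective M) : ContinuousOn A.dv (Icc (-(N : ℝ)) N) :=
  continuousOn_of_eq_add_integral (A.integrableOn_ddv hM) A.h_int2

theorem continuousOn_v (hM : Function.Injective M) : ContinuousOn A.v (Icc (-(N : ℝ)) N) :=
  continuousOn_of_eq_add_integral (A.continuousOn_dv hM).integrableOn_Icc A.v_eq_add_integral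

theorem integral_apply_ddv_dv_eq_zero (hM : Function.Injective M) (hMsym : ∀ x y, M x y = M y x) :
    ∫ r in (-(N : ℝ))..N, M (A.ddv r) (A.dv r) = 0 := by
  have h := two_mul_intervalIntegral_bilin_eq_sub hMsym (neg_le_self N.cast_nonneg)
    (A.integrableOn_ddv hM) A.h_int2
  rw [A.h_vel_start, A.h_vel_end] at h
  simpa using h

theorem intervalIntegrable_comp (hM : Function.Injective M) {DF : X → X →L[ℝ] ℝ}
    (hDF : Continuous DF) {φ : X × (X →L[ℝ] ℝ) × (X →L[ℝ] ℝ) → ℝ} (hφ : Continuous φ) :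
    IntervalIntegrable (fun r => φ (A.dv r, M (A.ddv r), DF (A.v r))) volume (-(N : ℝ)) N := by
  have hdv := A.continuousOn_dv hM
  have hDFv := hDF.comp_continuousOn (A.continuousOn_v hM)
  obtain ⟨C₁, hC₁⟩ := isCompact_Icc.exists_bound_of_continuousOn hdv
  obtain ⟨C₂, hC₂⟩ := isCompact_Icc.exists_bound_of_continuousOn hDFv
  rw [intervalIntegrable_iff_integrableOn_Icc_of_le (neg_le_self N.cast_nonneg)]
  refine integrable_comp_of_ae_mem_isCompact hφ ?_ ((isCompact_closedBall 0 C₁).prod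
    ((isCompact_closedBall 0 Cbar).prod (isCompact_closedBall 0 C₂))) ?_
  · exact (hdv.aestronglyMeasurable measurableSet_Icc).prodMk
      ((M.continuous.comp_aestronglyMeasurable A.h_meas.restrict).prodMk
        (hDFv.aestronglyMeasurable measurableSet_Icc))
  · filter_upwards [(ae_restrict_iff' measurableSet_Icc).2 A.h_bound,
      ae_restrict_mem measurableSet_Icc] with r hbound hr
    simp only [mem_prod, mem_closedBall_zero_iff]
    exact ⟨hC₁ r hr, hbound, hC₂ r hr⟩

theorem energy_gap_eq_integral (hM : Function.Injective M) (hMsym : ∀ x y, M x y = M y x)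
    {F : X → ℝ} {DF : X → X →L[ℝ] ℝ} (hF : ∀ x, HasFDerivAt F (DF x) x) (hDF : Continuous DF) :
    F u₁ - F u₂ = ∫ r in (-(N : ℝ))..N, (-(M (A.ddv r)) - DF (A.v r)) (A.dv r) := by
  have hinertia : IntervalIntegrable (fun r => M (A.ddv r) (A.dv r)) volume (-(N : ℝ)) N :=
    A.intervalIntegrable_comp hM hDF (φ := fun q => q.2.1 q.1) (by fun_prop)
  have hforce : IntervalIntegrable (fun r => DF (A.v r) (A.dv r)) volume (-(N : ℝ)) N :=
    A.intervalIntegrable_comp hM hDF (φ := fun q => q.2.2 q.1) (by fun_prop)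
  have hchain := integral_fderiv_comp_eq_sub hF hDF (neg_le_self N.cast_nonneg)
    (A.continuousOn_dv hM) A.v_eq_add_integral
  simp only [sub_apply, neg_apply]
  rw [intervalIntegral.integral_sub (f := fun r => -M (A.ddv r) (A.dv r)) hinertia.neg hforce,
    intervalIntegral.integral_neg, A.integral_apply_ddv_dv_eq_zero hM hMsym, hchain, A.h_start,
    A.h_end]
  ring

theorem energy_gap_le_integral (hM : Function.Injective M) (hMsym : ∀ x y, M x y = M y x)
    {F : X → ℝ} {DF : X → X →L[ℝ] ℝ} (hF : ∀ x, HasFDerivAt F (DF x) x) (hDF : Continuous DF)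
    {p : X → (X →L[ℝ] ℝ) → ℝ} (hp : Continuous fun q : X × (X →L[ℝ] ℝ) => p q.1 q.2)
    (hp_low : ∀ x w, w x ≤ p x w) :
    F u₁ - F u₂ ≤ ∫ r in (-(N : ℝ))..N, p (A.dv r) (-(M (A.ddv r)) - DF (A.v r)) := by
  rw [A.energy_gap_eq_integral hM hMsym hF hDF]
  refine intervalIntegral.integral_mono (neg_le_self N.cast_nonneg)
    (A.intervalIntegrable_comp hM hDF (φ := fun q => (-q.2.1 - q.2.2) q.1) (by fun_prop))
    (A.intervalIntegrable_comp hM hDF (φ := fun q => p q.1 (-q.2.1 - q.2.2)) ?_)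
    fun r => hp_low _ _
  exact hp.comp (by fun_prop : Continuous fun q : X × (X →L[ℝ] ℝ) × (X →L[ℝ] ℝ) =>
    (q.1, -q.2.1 - q.2.2))

end AdmCurve

theorem hasDerivAt_comp_div_smul {E : Type*} [NormedAddCommGroup E] [NormedSpace ℝ E]
    {σ σ' : ℝ → ℝ} (hσ : ∀ s, HasDerivAt σ (σ' s) s) (d : E) (c r : ℝ) :
    HasDerivAt (fun r => σ (r / c) • d) ((σ' (r / c) / c) • d) r := by
  have h := ((hσ (r / c)).comp r ((hasDerivAt_id r).div_const c)).smul_const d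
  simpa [div_eq_mul_inv] using h

theorem exists_admCurve {X : Type*} [NormedAddCommGroup X] [NormedSpace ℝ X] [CompleteSpace X]
    (M : X →L[ℝ] X →L[ℝ] ℝ) {Cbar : ℝ} (hCbar : 0 < Cbar) (u₁ u₂ : X) :
    ∃ N : ℕ, Nonempty (AdmCurve M Cbar N u₁ u₂) := by
  set d := u₂ - u₁
  obtain ⟨N, hN⟩ := exists_nat_ge (max 1 (3 * ‖M‖ * ‖d‖ / (2 * Cbar)))
  have hN1 : (1 : ℝ) ≤ N := (le_max_left _ _).trans hN
  have hNM : 3 * ‖M‖ * ‖d‖ ≤ 2 * Cbar * N := by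
    have := (le_max_right _ _).trans hN
    rwa [div_le_iff₀ (by positivity), mul_comm (N : ℝ)] at this
  have hN0 : (N : ℝ) ≠ 0 := by positivity
  -- the cubic profile `σ` moves from `0` to `1` on `[-1, 1]` with `σ' (±1) = 0`
  set σ : ℝ → ℝ := fun s => (2 + 3 * s - s ^ 3) / 4
  set σ' : ℝ → ℝ := fun s => 3 * (1 - s ^ 2) / 4
  set σ'' : ℝ → ℝ := fun s => -(3 * s) / 2
  have hσ (s : ℝ) : HasDerivAt σ (σ' s) s := by
    refine ((((hasDerivAt_id s).const_mul 3).const_add 2).sub (hasDerivAt_pow 3 s)).div_const 4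
      |>.congr_deriv ?_
    simp only [σ']; ring
  have hσ' (s : ℝ) : HasDerivAt (fun s => σ' s / N) (σ'' s / N) s := by
    refine ((((hasDerivAt_pow 2 s).const_sub 1).const_mul 3).div_const 4).div_const (N : ℝ)
      |>.congr_deriv ?_
    simp only [σ'']; ring
  refine ⟨N, ⟨{
    v := fun r => u₁ + σ (r / N) • d
    dv := fun r => (σ' (r / N) / N) • d
    ddv := fun r => (σ'' (r / N) / N / N) • d
    h_start := by simp [σ, hN0]; norm_num
    h_end := by simp [σ, hN0, d]; norm_num
    h_vel_start := by simp [σ', hN0]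
    h_vel_end := by simp [σ', hN0]
    h_meas := (by fun_prop : Continuous fun r => (σ'' (r / N) / N / N) • d).aestronglyMeasurable
    h_int1 := fun r _ => by
      rw [intervalIntegral.integral_eq_sub_of_hasDerivAt
        (fun x _ => hasDerivAt_comp_div_smul hσ d N x)
        (Continuous.intervalIntegrable (by fun_prop) _ _)]
      simp [σ, hN0]; norm_num
    h_int2 := fun r _ => by
      rw [intervalIntegral.integral_eq_sub_of_hasDerivAt
        (fun x _ => hasDerivAt_comp_div_smul hσ' d N x)
        (Continuous.intervalIntegrable (by fun_prop) _ _)]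
      abel
    h_bound := ae_of_all _ fun r hr => ?_ }⟩⟩
  have hprofile : |σ'' (r / N)| ≤ 3 / 2 := by
    have hs : |r / N| ≤ 1 := by
      rw [abs_div, Nat.abs_cast, div_le_one (by positivity), abs_le]
      exact hr
    simp only [σ'']
    rw [abs_le] at hs ⊢
    constructor <;> linarith [hs.1, hs.2]
  have hcoef : ‖σ'' (r / N) / N / N‖ ≤ 3 / 2 / N := by
    rw [Real.norm_eq_abs, abs_div, abs_div, Nat.abs_cast]
    calc |σ'' (r / N)| / N / N ≤ |σ'' (r / N)| / N := div_le_self (by positivity) hN1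
      _ ≤ 3 / 2 / N := by gcongr
  calc ‖M ((σ'' (r / N) / N / N) • d)‖ ≤ ‖M‖ * ‖(σ'' (r / N) / N / N) • d‖ := M.le_opNorm _
    _ = ‖σ'' (r / N) / N / N‖ * (‖M‖ * ‖d‖) := by rw [norm_smul]; ring
    _ ≤ 3 / 2 / N * (‖M‖ * ‖d‖) := by gcongr
    _ ≤ Cbar := by
      rw [div_mul_eq_mul_div, div_le_iff₀ (by positivity)]
      linarith

theorem energy_gap_le_inertialCost_general {X : Type*} [NormedAddCommGroup X] [NormedSpace ℝ X]
    [FiniteDimensional ℝ X]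
    (M : X →L[ℝ] X →L[ℝ] ℝ)
    (hMsym : ∀ x y, M x y = M y x)
    (hMpos : ∀ x : X, x ≠ 0 → 0 < M x x)
    (Cbar : ℝ) (hCbar : 0 < Cbar)
    (T : ℝ)
    (R : X → ℝ)
    (E : ℝ → X → ℝ) (DE : ℝ → X → (X →L[ℝ] ℝ))
    (hEdiff : ∀ t ∈ Set.Icc 0 T, ∀ x : X, HasFDerivAt (E t) (DE t x) x)
    (hDEcont : ContinuousOn (fun q : ℝ × X => DE q.1 q.2) (Set.Icc 0 T ×ˢ Set.univ))
    (p : X → (X →L[ℝ] ℝ) → ℝ)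
    (hp_cont : Continuous (fun q : X × (X →L[ℝ] ℝ) => p q.1 q.2))
    (hp_low : ∀ (x : X) (w : X →L[ℝ] ℝ), max (R x) (w x) ≤ p x w)
    (L : ℝ)
    (t : ℝ) (ht : t ∈ Set.Icc 0 T) (u₁ u₂ : X) :
    E t u₁ - E t u₂ ≤ inertialCost M Cbar p DE t u₁ u₂ := by
  obtain ⟨N₀, ⟨A₀⟩⟩ := exists_admCurve M hCbar u₁ u₂
  have hM := ContinuousLinearMap.injective_of_forall_apply_self_pos hMpos
  have hDE : Continuous (DE t) :=
    hDEcont.comp_continuous (continuous_const.prodMk continuous_id) fun x => ⟨ht, mem_univ x⟩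
  refine le_csInf ⟨_, N₀, A₀, rfl⟩ ?_
  rintro s ⟨N, A, rfl⟩
  exact A.energy_gap_le_integral hM hMsym (hEdiff t ht) hDE hp_cont fun x w =>
    (le_max_right _ _).trans (hp_low x w)

/-- Proposition 3.8: energy gap upper bound by the inertial
cost.  For every regularized contact potential `p` (in particular
`p(v,w) ≥ ⟨w,v⟩`), every `t ∈ [0,T]` and `u₁, u₂ ∈ X`:
`E(t,u₁) − E(t,u₂) ≤ c_t^{M,p}(u₁,u₂)`; consequently the energy gap is also
bounded by the infimum over all regularized contact potentials. -/
theorem energy_gap_le_inertialCost {X : Type*} [NormedAddCommGroup X] [NormedSpace ℝ X]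
    [FiniteDimensional ℝ X]
    (M : X →L[ℝ] X →L[ℝ] ℝ)
    (hMsym : ∀ x y, M x y = M y x)
    (hMpos : ∀ x : X, x ≠ 0 → 0 < M x x)
    (Cbar : ℝ) (hCbar : 0 < Cbar)
    (T : ℝ) (hT : 0 < T)
    (R : X → ℝ)
    (hRnonneg : ∀ x, 0 ≤ R x)
    (hRcoer : ∃ α > 0, ∀ x, α * ‖x‖ ≤ R x)
    (hRconv : ConvexOn ℝ Set.univ R)
    (hRhom : ∀ c : ℝ, 0 ≤ c → ∀ x, R (c • x) = c * R x)
    (E : ℝ → X → ℝ) (DE : ℝ → X → (X →L[ℝ] ℝ))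
    (hEdiff : ∀ t ∈ Set.Icc 0 T, ∀ x : X, HasFDerivAt (E t) (DE t x) x)
    (hDEcont : ContinuousOn (fun q : ℝ × X => DE q.1 q.2) (Set.Icc 0 T ×ˢ Set.univ))
    (p : X → (X →L[ℝ] ℝ) → ℝ)
    (hp_cont : Continuous (fun q : X × (X →L[ℝ] ℝ) => p q.1 q.2))
    (hp_hom : ∀ c : ℝ, 0 ≤ c → ∀ (x : X) (w : X →L[ℝ] ℝ), p (c • x) w = c * p x w)
    (hp_low : ∀ (x : X) (w : X →L[ℝ] ℝ), max (R x) (w x) ≤ p x w)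
    (L : ℝ) (hL : 0 ≤ L)
    (hp_lip : ∀ (x : X) (w₁ w₂ : X →L[ℝ] ℝ), |p x w₁ - p x w₂| ≤ L * ‖x‖ * ‖w₁ - w₂‖)
    (t : ℝ) (ht : t ∈ Set.Icc 0 T) (u₁ u₂ : X) :
    E t u₁ - E t u₂ ≤ inertialCost M Cbar p DE t u₁ u₂ :=
  energy_gap_le_inertialCost_general M hMsym hMpos Cbar hCbar T R E DE hEdiff hDEcont p hp_cont
    hp_low L t ht u₁ u₂
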